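/- Let s ∈ M_3(ℂ) ⊗ M_3(ℂ) be the flip operator and q the rank-one projection onto the maximally entangled vector. Then u := s − 2q is a unitary, and for all x ∈ M_3(ℂ): (id_3 ⊗ τ_3)(u (x ⊗ 1_3) u*) = (2/27) W_3^+(x) + (25/27) W_3^-(x). Hence (2/27)W_3^+ + (25/27)W_3^- has an exact factorization through M_3(ℂ) ⊗ M_3(ℂ). -/

import Mathlib

/-!
Write `u = s - t Ω` with `Ω = n q`. The relations `s² = 1`, `sΩ = Ωs = Ω` and `Ω² = nΩ` give
`u u = 1 + (n t² - 2t) Ω`, so the self-adjoint `u` is unitary for `t = 2/n`. Expanding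
`u (x ⊗ 1) u`, the partial trace sends `s (x ⊗ 1) s = 1 ⊗ x` and `Ω (x ⊗ 1) Ω = Tr(x) Ω` to
multiples of `Tr(x) 1`, and each cross term to `xᵀ / n`; altogether one gets
`((1 + t²)/n) Tr(x) 1 - (2t/n) xᵀ`, which for `n = 3`, `t = 2/3` is
`(13/27) Tr(x) 1 - (12/27) xᵀ = (2/27) W₃⁺(x) + (25/27) W₃⁻(x)`.
-/

open Matrix BigOperators

noncomputable section

/-- Partial trace `id_I ⊗ τ_K` with `τ_K` the normalized trace. -/
def ptrace {I K : Type*} [Fintype I] [DecidableEq I] [Fintype K] [DecidableEq K]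
    (M : Matrix (I × K) (I × K) ℂ) : Matrix I I ℂ :=
  Matrix.of fun i j => (Fintype.card K : ℂ)⁻¹ * ∑ s, M (i, s) (j, s)

open Kronecker

theorem isSelfAdjoint_two_div_natCast {R : Type*} [Field R] [StarRing R] (k : ℕ) :
    IsSelfAdjoint (2 / k : R) :=
  (IsSelfAdjoint.ofNat 2).div (.natCast k)

namespace Matrix

variable {n R : Type*} [DecidableEq n]

def flipMatrix [Zero R] [One R] : Matrix (n × n) (n × n) R :=
  of fun a b => if a = b.swap then 1 else 0

/-- `n • q`, where `q` is the projection onto the maximally entangled vector `n^{-1/2} ∑ eᵢ ⊗ eᵢ`. -/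
def maxEntMatrix [Zero R] [One R] : Matrix (n × n) (n × n) R :=
  of fun a b => if a.1 = a.2 ∧ b.1 = b.2 then 1 else 0

section StarRing

variable [CommSemiring R] [StarRing R]

theorem conjTranspose_flipMatrix : (flipMatrix : Matrix (n × n) (n × n) R)ᴴ = flipMatrix := by
  ext ⟨a, b⟩ ⟨c, d⟩
  by_cases h : a = d ∧ b = c
  · simp [flipMatrix, h]
  · simp [flipMatrix, h, eq_comm, and_comm]

theorem conjTranspose_maxEntMatrix :
    (maxEntMatrix : Matrix (n × n) (n × n) R)ᴴ = maxEntMatrix := by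
  ext ⟨a, b⟩ ⟨c, d⟩
  by_cases h : a = b ∧ c = d
  · simp [maxEntMatrix, h]
  · simp [maxEntMatrix, h, and_comm]

end StarRing

section CommSemiring

variable [Fintype n] [CommSemiring R]

theorem sum_single_kronecker_single_swap :
    ∑ i : n, ∑ j : n, single i j (1 : R) ⊗ₖ single j i 1 = flipMatrix := by
  ext ⟨a, b⟩ ⟨c, d⟩
  simp [flipMatrix, sum_apply, single_apply, ite_and, eq_comm]

theorem sum_single_kronecker_single :
    ∑ i : n, ∑ j : n, single i j (1 : R) ⊗ₖ single i j 1 = maxEntMatrix := by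
  ext ⟨a, b⟩ ⟨c, d⟩
  simp [maxEntMatrix, sum_apply, single_apply, ite_and, eq_comm]

theorem flipMatrix_mul_flipMatrix : (flipMatrix : Matrix (n × n) (n × n) R) * flipMatrix = 1 := by
  ext ⟨a, b⟩ ⟨c, d⟩
  simp [flipMatrix, mul_apply, one_apply, ite_and]

theorem flipMatrix_mul_maxEntMatrix :
    (flipMatrix : Matrix (n × n) (n × n) R) * maxEntMatrix = maxEntMatrix := by
  ext ⟨a, b⟩ ⟨c, d⟩
  rcases eq_or_ne a b with rfl | hab
  · simp [flipMatrix, maxEntMatrix, mul_apply, Fintype.sum_prod_type, ite_and]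
  · simp [flipMatrix, maxEntMatrix, mul_apply, Fintype.sum_prod_type, ite_and, hab, hab.symm]

theorem maxEntMatrix_mul_flipMatrix :
    (maxEntMatrix : Matrix (n × n) (n × n) R) * flipMatrix = maxEntMatrix := by
  ext ⟨a, b⟩ ⟨c, d⟩
  simp [flipMatrix, maxEntMatrix, mul_apply, ite_and, eq_comm]

theorem maxEntMatrix_mul_maxEntMatrix :
    (maxEntMatrix : Matrix (n × n) (n × n) R) * maxEntMatrix =
      (Fintype.card n : R) • maxEntMatrix := by
  ext ⟨a, b⟩ ⟨c, d⟩
  rcases eq_or_ne a b with rfl | hab <;>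
    simp [maxEntMatrix, mul_apply, Fintype.sum_prod_type, ite_and, *]

theorem flipMatrix_mul_kronecker_mul_flipMatrix (x y : Matrix n n R) :
    flipMatrix * (x ⊗ₖ y) * flipMatrix = y ⊗ₖ x := by
  ext ⟨a, b⟩ ⟨c, d⟩
  simp [flipMatrix, mul_apply, Fintype.sum_prod_type, ite_and, mul_comm]

theorem maxEntMatrix_mul_kronecker_one_mul_maxEntMatrix (x : Matrix n n R) :
    maxEntMatrix * (x ⊗ₖ 1) * maxEntMatrix = x.trace • maxEntMatrix := by
  ext ⟨a, b⟩ ⟨c, d⟩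
  rcases eq_or_ne a b with rfl | hab <;>
    simp [maxEntMatrix, mul_apply, Fintype.sum_prod_type, ite_and, one_apply, trace, *]

end CommSemiring

theorem flipMatrix_sub_smul_maxEntMatrix_mul_self [Fintype n] [CommRing R] (t : R) :
    (flipMatrix - t • maxEntMatrix) * (flipMatrix - t • maxEntMatrix) =
      (1 : Matrix (n × n) (n × n) R) + (Fintype.card n * t ^ 2 - 2 * t) • maxEntMatrix := by
  simp only [sub_mul, mul_sub, smul_mul_assoc, mul_smul_comm, flipMatrix_mul_flipMatrix,
    flipMatrix_mul_maxEntMatrix, maxEntMatrix_mul_flipMatrix, maxEntMatrix_mul_maxEntMatrix]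
  module

theorem isHermitian_flipMatrix_sub_smul_maxEntMatrix [CommRing R] [StarRing R] {t : R}
    (ht : IsSelfAdjoint t) :
    (flipMatrix - t • maxEntMatrix : Matrix (n × n) (n × n) R).IsHermitian := by
  rw [IsHermitian, conjTranspose_sub, conjTranspose_smul, ht.star_eq, conjTranspose_flipMatrix,
    conjTranspose_maxEntMatrix]

theorem flipMatrix_sub_smul_maxEntMatrix_mem_unitaryGroup [Fintype n] [Nonempty n] [Field R]
    [CharZero R] [StarRing R] :
    flipMatrix - (2 / Fintype.card n : R) • maxEntMatrix ∈ unitaryGroup (n × n) R := by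
  rw [mem_unitaryGroup_iff, star_eq_conjTranspose,
    (isHermitian_flipMatrix_sub_smul_maxEntMatrix (isSelfAdjoint_two_div_natCast _)).eq,
    flipMatrix_sub_smul_maxEntMatrix_mul_self]
  have hcard : (Fintype.card n : R) ≠ 0 := Nat.cast_ne_zero.mpr Fintype.card_ne_zero
  field_simp
  simp

end Matrix

section ptrace

variable {I K : Type*} [Fintype I] [DecidableEq I] [Fintype K] [DecidableEq K]

theorem ptrace_sub (M N : Matrix (I × K) (I × K) ℂ) : ptrace (M - N) = ptrace M - ptrace N := by
  ext i j
  simp [ptrace, Finset.sum_sub_distrib, mul_sub]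

theorem ptrace_smul (c : ℂ) (M : Matrix (I × K) (I × K) ℂ) : ptrace (c • M) = c • ptrace M := by
  ext i j
  simp [ptrace, Finset.mul_sum, mul_left_comm]

theorem ptrace_kronecker (A : Matrix I I ℂ) (B : Matrix K K ℂ) :
    ptrace (A ⊗ₖ B) = ((Fintype.card K : ℂ)⁻¹ * B.trace) • A := by
  ext i j
  simp only [ptrace, of_apply, kroneckerMap_apply, Matrix.smul_apply, trace, diag_apply,
    smul_eq_mul, Finset.mul_sum, Finset.sum_mul]
  exact Finset.sum_congr rfl fun _ _ => by ring

variable {n : Type*} [Fintype n] [DecidableEq n]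

theorem ptrace_maxEntMatrix :
    ptrace (maxEntMatrix : Matrix (n × n) (n × n) ℂ) = (Fintype.card n : ℂ)⁻¹ • 1 := by
  ext i j
  rcases eq_or_ne i j with rfl | h
  · simp [ptrace, maxEntMatrix, Finset.filter_eq]
  · simp [ptrace, maxEntMatrix, h, h.symm]

theorem ptrace_maxEntMatrix_mul_kronecker_one_mul_flipMatrix (x : Matrix n n ℂ) :
    ptrace (maxEntMatrix * (x ⊗ₖ 1) * flipMatrix) = (Fintype.card n : ℂ)⁻¹ • xᵀ := by
  ext i j
  simp [ptrace, maxEntMatrix, flipMatrix, mul_apply, Fintype.sum_prod_type, ite_and, one_apply]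

theorem ptrace_flipMatrix_mul_kronecker_one_mul_maxEntMatrix (x : Matrix n n ℂ) :
    ptrace (flipMatrix * (x ⊗ₖ 1) * maxEntMatrix) = (Fintype.card n : ℂ)⁻¹ • xᵀ := by
  ext i j
  simp [ptrace, maxEntMatrix, flipMatrix, mul_apply, Fintype.sum_prod_type, ite_and, one_apply]

theorem ptrace_conj_flipMatrix_sub_smul_maxEntMatrix (t : ℂ) (x : Matrix n n ℂ) :
    ptrace ((flipMatrix - t • maxEntMatrix) * (x ⊗ₖ (1 : Matrix n n ℂ)) *
        (flipMatrix - t • maxEntMatrix)) =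
      ((1 + t ^ 2) / Fintype.card n * x.trace) • (1 : Matrix n n ℂ) -
        (2 * t / Fintype.card n) • xᵀ := by
  simp only [sub_mul, mul_sub, smul_mul_assoc, mul_smul_comm, ptrace_sub, ptrace_smul,
    flipMatrix_mul_kronecker_mul_flipMatrix, ptrace_kronecker,
    ptrace_maxEntMatrix_mul_kronecker_one_mul_flipMatrix,
    ptrace_flipMatrix_mul_kronecker_one_mul_maxEntMatrix,
    maxEntMatrix_mul_kronecker_one_mul_maxEntMatrix, ptrace_maxEntMatrix]
  module

end ptrace

/-- with `s` the flip on `M₃ ⊗ M₃` and `q` the maximally entangled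
projection, `u := s − 2q` is a unitary and
`(id₃ ⊗ τ₃)(u (x ⊗ 1₃) u*) = (2/27) W₃⁺(x) + (25/27) W₃⁻(x)` for all `x ∈ M₃(ℂ)`,
where `W₃⁺(x) = (1/4)(Tr(x)·1 + xᵗ)` and `W₃⁻(x) = (1/2)(Tr(x)·1 − xᵗ)`. Hence
`(2/27)W₃⁺ + (25/27)W₃⁻` has an exact factorization through `M₃(ℂ) ⊗ M₃(ℂ)`. -/
theorem flip_minus_twice_q_factorization
    (s q u : Matrix (Fin 3 × Fin 3) (Fin 3 × Fin 3) ℂ)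
    (hs : s = ∑ i : Fin 3, ∑ j : Fin 3,
        (Matrix.single i j (1 : ℂ)).kronecker (Matrix.single j i 1))
    (hq : q = (3 : ℂ)⁻¹ • ∑ i : Fin 3, ∑ j : Fin 3,
        (Matrix.single i j (1 : ℂ)).kronecker (Matrix.single i j 1))
    (hu : u = s - (2 : ℂ) • q) :
    u ∈ Matrix.unitaryGroup (Fin 3 × Fin 3) ℂ ∧
    ∀ x : Matrix (Fin 3) (Fin 3) ℂ,
      ptrace (u * (x.kronecker (1 : Matrix (Fin 3) (Fin 3) ℂ)) * uᴴ)
        = (2 / 27 : ℂ) • ((4 : ℂ)⁻¹ • (x.trace • (1 : Matrix (Fin 3) (Fin 3) ℂ) + xᵀ))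
          + (25 / 27 : ℂ) • ((2 : ℂ)⁻¹ • (x.trace • (1 : Matrix (Fin 3) (Fin 3) ℂ) - xᵀ)) := by
  have hu' : u = flipMatrix - (2 / Fintype.card (Fin 3) : ℂ) • maxEntMatrix := by
    rw [hu, hs, hq]
    simp only [kronecker, sum_single_kronecker_single_swap, sum_single_kronecker_single, smul_smul]
    norm_num
  have hself : uᴴ = u :=
    hu' ▸ (isHermitian_flipMatrix_sub_smul_maxEntMatrix (isSelfAdjoint_two_div_natCast _)).eq
  refine ⟨hu' ▸ flipMatrix_sub_smul_maxEntMatrix_mem_unitaryGroup, fun x => ?_⟩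
  rw [hself, hu', kronecker, ptrace_conj_flipMatrix_sub_smul_maxEntMatrix, Fintype.card_fin]
  module

end
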